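/- Let ε > 0, ρ̄, b̄ ∈ ℝ, T > 0. Let r, β : (0,T) × ℝ³ → ℝ and u : (0,T) × ℝ³ → ℝ³ be continuously differentiable, and set ρ := ρ̄ + ε·r, b := b̄ + ε·β, V := ρ·u, W := b·u and α := ρ̄·β − b̄·r. Assume the two continuity equations ε·∂_t r + div V = 0 and ε·∂_t β + div W = 0 hold on (0,T) × ℝ³. Then: (i) the algebraic identity ρ̄·W − b̄·V = ε·α·u holds pointwise; and (ii) α solves the pure transport-type equation ∂_t α + div(α·u) = 0 on (0,T) × ℝ³, an equation with no singular terms in ε. -/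

import Mathlib

/-- Partial derivative in direction `i` of a scalar function on `ℝ³`. -/
noncomputable def pd (i : Fin 3) (f : (Fin 3 → ℝ) → ℝ) (x : Fin 3 → ℝ) : ℝ :=
  fderiv ℝ f x (Pi.single i 1)

lemma pd_congr (i : Fin 3) (f g : (Fin 3 → ℝ) → ℝ) (h : ∀ y, f y = g y) (x) :
    pd i f x = pd i g x := by
  have : f = g := funext h
  rw [this]

lemma pd_comb (i : Fin 3) (c d : ℝ) (f g : (Fin 3 → ℝ) → ℝ) (x)
    (hf : DifferentiableAt ℝ f x) (hg : DifferentiableAt ℝ g x) :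
    pd i (fun y => c * f y - d * g y) x = c * pd i f x - d * pd i g x := by
  unfold pd
  rw [fderiv_fun_sub ((hf.const_mul c)) ((hg.const_mul d)),
    fderiv_const_mul hf c, fderiv_const_mul hg d]
  simp

/-- With `ρ = ρ̄ + εr`, `b = b̄ + εβ`, `V = ρu`, `W = bu`,
`α = ρ̄β − b̄r`, if `ε∂ₜr + div V = 0` and `ε∂ₜβ + div W = 0` on `(0,T) × ℝ³`, then
(i) `ρ̄W − b̄V = εαu` pointwise, and (ii) `∂ₜα + div(αu) = 0` on `(0,T) × ℝ³`. -/
theorem stmt8 (ε rhoBar bBar T : ℝ) (hε : 0 < ε) (hT : 0 < T)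
    (r β : ℝ → (Fin 3 → ℝ) → ℝ) (u : ℝ → (Fin 3 → ℝ) → (Fin 3 → ℝ))
    (hr : ContDiffOn ℝ 1 (fun p : ℝ × (Fin 3 → ℝ) => r p.1 p.2)
      (Set.Ioo 0 T ×ˢ Set.univ))
    (hβ : ContDiffOn ℝ 1 (fun p : ℝ × (Fin 3 → ℝ) => β p.1 p.2)
      (Set.Ioo 0 T ×ˢ Set.univ))
    (hu : ContDiffOn ℝ 1 (fun p : ℝ × (Fin 3 → ℝ) => u p.1 p.2)
      (Set.Ioo 0 T ×ˢ Set.univ))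
    (ρ b α : ℝ → (Fin 3 → ℝ) → ℝ) (V W : ℝ → (Fin 3 → ℝ) → (Fin 3 → ℝ))
    (hρ : ∀ t x, ρ t x = rhoBar + ε * r t x)
    (hb : ∀ t x, b t x = bBar + ε * β t x)
    (hV : ∀ t x, V t x = ρ t x • u t x)
    (hW : ∀ t x, W t x = b t x • u t x)
    (hα : ∀ t x, α t x = rhoBar * β t x - bBar * r t x)
    (heqr : ∀ t ∈ Set.Ioo (0 : ℝ) T, ∀ x,
      ε * deriv (fun s => r s x) t + ∑ i, pd i (fun y => V t y i) x = 0)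
    (heqβ : ∀ t ∈ Set.Ioo (0 : ℝ) T, ∀ x,
      ε * deriv (fun s => β s x) t + ∑ i, pd i (fun y => W t y i) x = 0) :
    (∀ t x, rhoBar • W t x - bBar • V t x = (ε * α t x) • u t x) ∧
    (∀ t ∈ Set.Ioo (0 : ℝ) T, ∀ x,
      deriv (fun s => α s x) t + ∑ i, pd i (fun y => α t y * u t y i) x = 0) := by
  have hopen : IsOpen (Set.Ioo (0 : ℝ) T ×ˢ (Set.univ : Set (Fin 3 → ℝ))) :=
    isOpen_Ioo.prod isOpen_univ
  -- pointwise identity (i), componentwise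
  have key : ∀ t x i, rhoBar * W t x i - bBar * V t x i = (ε * α t x) * u t x i := by
    intro t x i
    simp only [hV, hW, hρ, hb, hα, Pi.smul_apply, smul_eq_mul]
    ring
  have part1 : ∀ t x, rhoBar • W t x - bBar • V t x = (ε * α t x) • u t x := by
    intro t x
    funext i
    simpa using key t x i
  refine ⟨part1, ?_⟩
  intro t ht x
  have hmem : (t, x) ∈ Set.Ioo (0 : ℝ) T ×ˢ (Set.univ : Set (Fin 3 → ℝ)) :=
    ⟨ht, Set.mem_univ x⟩
  have hnhds := hopen.mem_nhds hmem
  -- differentiability of the joint maps at (t,x)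
  have hrD : DifferentiableAt ℝ (fun p : ℝ × (Fin 3 → ℝ) => r p.1 p.2) (t, x) :=
    (hr.contDiffAt hnhds).differentiableAt one_ne_zero
  have hβD : DifferentiableAt ℝ (fun p : ℝ × (Fin 3 → ℝ) => β p.1 p.2) (t, x) :=
    (hβ.contDiffAt hnhds).differentiableAt one_ne_zero
  have huD : DifferentiableAt ℝ (fun p : ℝ × (Fin 3 → ℝ) => u p.1 p.2) (t, x) :=
    (hu.contDiffAt hnhds).differentiableAt one_ne_zero
  -- time-slice differentiability
  have hst : DifferentiableAt ℝ (fun s : ℝ => (s, x)) t :=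
    (differentiableAt_id.prodMk (differentiableAt_const x))
  have hrT : DifferentiableAt ℝ (fun s => r s x) t := by have := hrD.comp t hst; exact this
  have hβT : DifferentiableAt ℝ (fun s => β s x) t := by have := hβD.comp t hst; exact this
  -- space-slice differentiability
  have hsx : DifferentiableAt ℝ (fun y : Fin 3 → ℝ => (t, y)) x :=
    ((differentiableAt_const t).prodMk differentiableAt_id)
  have hrX : DifferentiableAt ℝ (fun y => r t y) x := hrD.comp x hsx
  have hβX : DifferentiableAt ℝ (fun y => β t y) x := hβD.comp x hsx
  have huX : ∀ i, DifferentiableAt ℝ (fun y => u t y i) x := by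
    intro i
    exact (differentiableAt_pi.mp (huD.comp x hsx)) i
  have hVX : ∀ i, DifferentiableAt ℝ (fun y => V t y i) x := by
    intro i
    have : (fun y => V t y i) = fun y => (rhoBar + ε * r t y) * u t y i := by
      funext y; simp [hV, hρ]
    rw [this]
    exact ((differentiableAt_const rhoBar).add (hrX.const_mul ε)).mul (huX i)
  have hWX : ∀ i, DifferentiableAt ℝ (fun y => W t y i) x := by
    intro i
    have : (fun y => W t y i) = fun y => (bBar + ε * β t y) * u t y i := by
      funext y; simp [hW, hb]
    rw [this]
    exact ((differentiableAt_const bBar).add (hβX.const_mul ε)).mul (huX i)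
  -- deriv of α in time
  have hderα : deriv (fun s => α s x) t
      = rhoBar * deriv (fun s => β s x) t - bBar * deriv (fun s => r s x) t := by
    have : (fun s => α s x) = fun s => rhoBar * β s x - bBar * r s x := by
      funext s; exact hα s x
    rw [this, deriv_fun_sub ((hβT.const_mul rhoBar)) ((hrT.const_mul bBar)),
      deriv_const_mul rhoBar hβT, deriv_const_mul bBar hrT]
  -- rewrite each pd term
  have hpd : ∀ i, pd i (fun y => α t y * u t y i) x
      = ε⁻¹ * (rhoBar * pd i (fun y => W t y i) x)
        - ε⁻¹ * (bBar * pd i (fun y => V t y i) x) := by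
    intro i
    have h1 : pd i (fun y => α t y * u t y i) x
        = pd i (fun y => (ε⁻¹ * rhoBar) * W t y i - (ε⁻¹ * bBar) * V t y i) x := by
      apply pd_congr
      intro y
      have := key t y i
      field_simp
      linarith [key t y i]
    rw [h1, pd_comb i _ _ _ _ x (hWX i) (hVX i)]
    ring
  have hsum : ∑ i, pd i (fun y => α t y * u t y i) x
      = ε⁻¹ * (rhoBar * ∑ i, pd i (fun y => W t y i) x)
        - ε⁻¹ * (bBar * ∑ i, pd i (fun y => V t y i) x) := by
    rw [Finset.mul_sum, Finset.mul_sum, Finset.mul_sum, Finset.mul_sum,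
      ← Finset.sum_sub_distrib]
    exact Finset.sum_congr rfl fun i _ => hpd i
  have hr0 := heqr t ht x
  have hβ0 := heqβ t ht x
  have hε' : ε ≠ 0 := ne_of_gt hε
  have hWs : ∑ i, pd i (fun y => W t y i) x = -(ε * deriv (fun s => β s x) t) := by
    linarith
  have hVs : ∑ i, pd i (fun y => V t y i) x = -(ε * deriv (fun s => r s x) t) := by
    linarith
  rw [hderα, hsum, hWs, hVs]
  field_simp
  ring
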